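/- Every infinite-dimensional real Banach space X admits an equivalent norm N such that (X, N) has a Δ-point and the dual space equipped with the dual norm N*(x*) := sup_{N(y) ≤ 1} x*(y) has a weak* super Δ-point: there is x* with N*(x*) = 1 such that sup{ N*(x* − y*) : y* ∈ W, N*(y*) ≤ 1 } = 2 for every weak*-open subset W of X* containing x*. -/

import Mathlib

open NormedSpace Topology Filter

/-- `N` is an equivalent norm on the normed space `Z`. -/
def IsEquivNorm (Z : Type*) [NormedAddCommGroup Z] [NormedSpace ℝ Z] (N : Z → ℝ) : Prop :=
  (∀ z w : Z, N (z + w) ≤ N z + N w) ∧ (∀ (a : ℝ) (z : Z), N (a • z) = |a| * N z) ∧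
  (∃ c C : ℝ, 0 < c ∧ 0 < C ∧ ∀ z : Z, c * ‖z‖ ≤ N z ∧ N z ≤ C * ‖z‖)

/-- The norm `N` on `Z` admits a Δ-point. -/
def HasDeltaPointForNorm (Z : Type*) [NormedAddCommGroup Z] [NormedSpace ℝ Z]
    (N : Z → ℝ) : Prop :=
  ∃ z₀ : Z, N z₀ = 1 ∧ ∀ f : Z →L[ℝ] ℝ, sSup (f '' {y : Z | N y ≤ 1}) = 1 →
    ∀ ε : ℝ, 0 < ε → 1 - ε < f z₀ →
      sSup ((fun y => N (z₀ - y)) '' {y : Z | N y ≤ 1 ∧ 1 - ε < f y}) = 2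

/-- The dual norm of the norm `N` on `Z`: `N*(f) = sup { f y : N y ≤ 1 }`. -/
noncomputable def dualNormOf (Z : Type*) [NormedAddCommGroup Z] [NormedSpace ℝ Z]
    (N : Z → ℝ) (f : StrongDual ℝ Z) : ℝ :=
  sSup (f '' {y : Z | N y ≤ 1})

/-- The dual norm `N*` of the norm `N` on `Z` admits a weak* super Δ-point: a functional
`g` with `N* g = 1` such that every relatively weak*-open subset of the `N*`-unit ball
containing `g` contains functionals whose `N*`-distance to `g` is arbitrarily close to
`2`.  (The weak* topology is unchanged under an equivalent renorming of `Z`.) -/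
def DualHasWeakStarSuperDeltaPointForNorm (Z : Type*) [NormedAddCommGroup Z]
    [NormedSpace ℝ Z] (N : Z → ℝ) : Prop :=
  ∃ g : StrongDual ℝ Z, dualNormOf Z N g = 1 ∧
    ∀ U : Set (WeakDual ℝ Z), IsOpen U → StrongDual.toWeakDual g ∈ U →
      sSup ((fun h => dualNormOf Z N (g - h)) ''
        {h : StrongDual ℝ Z | dualNormOf Z N h ≤ 1 ∧
          StrongDual.toWeakDual h ∈ U}) = 2

/-!
Take a biorthogonal system `(e_i, f_i)`, with `‖e_i‖ = 1` and `‖f_i‖` bounded, indexed by a root,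
the nodes of the infinite binary tree and `ℕ`, such that `0` is a weak* cluster point of the
`f_n`, `n ∈ ℕ`. Renorm by `N x = max (‖x‖ / 4) (sup |φ x|)` over the functionals `f_root`, `f_n`,
`f_root - 2 f_n` and `f_root + φ_t`, where `φ_t = -2 f_t + φ_{parent t} / 2`; the damping keeps
`φ_t` bounded while `φ_s (w_t) = -2 δ_{st}` for `w_t = e_t - (e_{t0} + e_{t1}) / 2`.

Then `e_root` is a Δ-point: the points `e_root + w_t` lie in the unit ball at distance `2` from
`e_root`, and since the `w_t` telescope along the levels of the tree, `e_root` is in the closed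
convex hull of these points, so every slice through `e_root` contains one of them. Dually,
`f_root - 2 f_n` lie in the dual unit ball at distance `2` from `f_root` (tested on
`e_root + e_n`) and weak*-cluster at `f_root`.
-/

section DualNorm

variable {X : Type*} [NormedAddCommGroup X] [NormedSpace ℝ X] {N : X → ℝ}

namespace IsEquivNorm

lemma map_neg (hN : IsEquivNorm X N) (x : X) : N (-x) = N x := by
  simpa using hN.2.1 (-1) x

lemma map_sub_le (hN : IsEquivNorm X N) (x y : X) : N (x - y) ≤ N x + N y := by
  simpa [sub_eq_add_neg, hN.map_neg] using hN.1 x (-y)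

lemma map_zero (hN : IsEquivNorm X N) : N 0 = 0 := by
  simpa using hN.2.1 0 0

lemma bddAbove_image_ball (hN : IsEquivNorm X N) (g : StrongDual ℝ X) :
    BddAbove (g '' {y | N y ≤ 1}) := by
  obtain ⟨c, _, hc, _, hcN⟩ := hN.2.2
  refine ⟨‖g‖ / c, ?_⟩
  rintro _ ⟨y, hy, rfl⟩
  have hy' : ‖y‖ ≤ 1 / c := by
    rw [le_div_iff₀ hc, mul_comm]
    exact (hcN y).1.trans hy
  calc g y ≤ ‖g‖ * ‖y‖ := (le_abs_self _).trans (g.le_opNorm y)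
    _ ≤ ‖g‖ * (1 / c) := by gcongr
    _ = ‖g‖ / c := by ring

lemma le_dualNormOf (hN : IsEquivNorm X N) (g : StrongDual ℝ X) {y : X} (hy : N y ≤ 1) :
    g y ≤ dualNormOf X N g :=
  le_csSup (hN.bddAbove_image_ball g) ⟨y, hy, rfl⟩

lemma dualNormOf_le (hN : IsEquivNorm X N) {g : StrongDual ℝ X} {B : ℝ}
    (h : ∀ y, N y ≤ 1 → g y ≤ B) : dualNormOf X N g ≤ B :=
  csSup_le ⟨g 0, 0, by simp [hN.map_zero], rfl⟩ (by rintro _ ⟨y, hy, rfl⟩; exact h y hy)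

lemma dualNormOf_sub_le (hN : IsEquivNorm X N) (g h : StrongDual ℝ X) :
    dualNormOf X N (g - h) ≤ dualNormOf X N g + dualNormOf X N h :=
  hN.dualNormOf_le fun y hy => by
    have := hN.le_dualNormOf h (y := -y) (by rwa [hN.map_neg])
    rw [ContinuousLinearMap.map_neg] at this
    rw [sub_apply]
    linarith [hN.le_dualNormOf g hy]

end IsEquivNorm

lemma exists_lt_apply_of_mem_closure_convexHull {ι : Type*} {v : ι → X} {x : X}
    (hx : x ∈ closure (convexHull ℝ (Set.range v))) (F : StrongDual ℝ X) {r : ℝ}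
    (hr : r < F x) : ∃ i, r < F (v i) := by
  by_contra! h
  have hsub : closure (convexHull ℝ (Set.range v)) ⊆ {y | F y ≤ r} :=
    closure_minimal (convexHull_min (Set.range_subset_iff.2 h) (convex_halfSpace_le F.isLinear r))
      (isClosed_le F.continuous continuous_const)
  exact (hsub hx).not_gt hr

theorem hasDeltaPointForNorm_of_mem_closure_convexHull (hN : IsEquivNorm X N) {x₀ : X}
    (hx₀ : N x₀ = 1) {ι : Type*} {v : ι → X} (hv : ∀ i, N (v i) ≤ 1)
    (hdist : ∀ i, 2 ≤ N (x₀ - v i)) (hx₀v : x₀ ∈ closure (convexHull ℝ (Set.range v))) :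
    HasDeltaPointForNorm X N := by
  refine ⟨x₀, hx₀, fun F _ ε _ hF => ?_⟩
  have hle : ∀ y, N y ≤ 1 → N (x₀ - y) ≤ 2 := fun y hy => by
    linarith [hN.map_sub_le x₀ y]
  obtain ⟨i, hi⟩ := exists_lt_apply_of_mem_closure_convexHull hx₀v F hF
  refine IsGreatest.csSup_eq ⟨⟨v i, ⟨hv i, hi⟩, (hle _ (hv i)).antisymm (hdist i)⟩, ?_⟩
  rintro _ ⟨y, ⟨hy, -⟩, rfl⟩
  exact hle y hy

theorem dualHasWeakStarSuperDeltaPointForNorm_of_mem_closure (hN : IsEquivNorm X N)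
    {g : StrongDual ℝ X} (hg : dualNormOf X N g = 1) {ι : Type*} {h : ι → StrongDual ℝ X}
    (hh : ∀ i, dualNormOf X N (h i) ≤ 1) (hdist : ∀ i, 2 ≤ dualNormOf X N (g - h i))
    (hgh : StrongDual.toWeakDual g ∈ closure (Set.range (StrongDual.toWeakDual ∘ h))) :
    DualHasWeakStarSuperDeltaPointForNorm X N := by
  refine ⟨g, hg, fun U hU hgU => ?_⟩
  have hle : ∀ k, dualNormOf X N k ≤ 1 → dualNormOf X N (g - k) ≤ 2 := fun k hk => by
    linarith [hN.dualNormOf_sub_le g k]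
  obtain ⟨_, hiU, i, rfl⟩ := mem_closure_iff.1 hgh U hU hgU
  refine IsGreatest.csSup_eq ⟨⟨h i, ⟨hh i, hiU⟩, (hle _ (hh i)).antisymm (hdist i)⟩, ?_⟩
  rintro _ ⟨k, ⟨hk, -⟩, rfl⟩
  exact hle k hk

end DualNorm

section SupNorm

variable {X : Type*} [NormedAddCommGroup X] [NormedSpace ℝ X]

noncomputable def supNorm (c : ℝ) (S : Set (StrongDual ℝ X)) (x : X) : ℝ :=
  max (c * ‖x‖) (⨆ φ : S, |(φ : StrongDual ℝ X) x|)

variable {c C : ℝ} {S : Set (StrongDual ℝ X)}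

lemma bddAbove_range_abs_apply (hS : ∀ φ ∈ S, ‖φ‖ ≤ C) (x : X) :
    BddAbove (Set.range fun φ : S => |(φ : StrongDual ℝ X) x|) := by
  refine ⟨C * ‖x‖, ?_⟩
  rintro _ ⟨φ, rfl⟩
  exact ((φ : StrongDual ℝ X).le_opNorm x).trans (by gcongr; exact hS φ φ.2)

lemma abs_apply_le_supNorm (hS : ∀ φ ∈ S, ‖φ‖ ≤ C) {φ : StrongDual ℝ X} (hφ : φ ∈ S) (x : X) :
    |φ x| ≤ supNorm c S x :=
  (le_ciSup (bddAbove_range_abs_apply hS x) ⟨φ, hφ⟩).trans (le_max_right _ _)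

lemma supNorm_le (hc : 0 ≤ c) {x : X} {B : ℝ} (hxB : c * ‖x‖ ≤ B)
    (hSB : ∀ φ ∈ S, |φ x| ≤ B) : supNorm c S x ≤ B :=
  max_le hxB (Real.iSup_le (fun φ => hSB φ φ.2) ((by positivity : 0 ≤ c * ‖x‖).trans hxB))

lemma isEquivNorm_supNorm (hc : 0 < c) (hS : ∀ φ ∈ S, ‖φ‖ ≤ C) :
    IsEquivNorm X (supNorm c S) := by
  refine ⟨fun x y => supNorm_le hc.le ?_ fun φ hφ => ?_, fun a x => ?_,
    c, max c C, hc, lt_max_of_lt_left hc, fun x => ⟨le_max_left _ _, ?_⟩⟩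
  · calc c * ‖x + y‖ ≤ c * ‖x‖ + c * ‖y‖ := by rw [← mul_add]; gcongr; exact norm_add_le x y
      _ ≤ supNorm c S x + supNorm c S y := add_le_add (le_max_left _ _) (le_max_left _ _)
  · calc |φ (x + y)| ≤ |φ x| + |φ y| := by rw [map_add]; exact abs_add_le _ _
      _ ≤ supNorm c S x + supNorm c S y :=
          add_le_add (abs_apply_le_supNorm hS hφ x) (abs_apply_le_supNorm hS hφ y)
  · simp only [supNorm, map_smul, smul_eq_mul, abs_mul, norm_smul, Real.norm_eq_abs,
      ← Real.mul_iSup_of_nonneg (abs_nonneg a), mul_left_comm c,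
      mul_max_of_nonneg _ _ (abs_nonneg a)]
  · refine supNorm_le hc.le (by gcongr; exact le_max_left _ _) fun φ hφ => ?_
    exact (φ.le_opNorm x).trans (by gcongr; exact (hS φ hφ).trans (le_max_right _ _))

lemma dualNormOf_supNorm_le_one (hc : 0 < c) (hS : ∀ φ ∈ S, ‖φ‖ ≤ C) {φ : StrongDual ℝ X}
    (hφ : φ ∈ S) : dualNormOf X (supNorm c S) φ ≤ 1 :=
  (isEquivNorm_supNorm hc hS).dualNormOf_le fun y hy =>
    (le_abs_self _).trans ((abs_apply_le_supNorm hS hφ y).trans hy)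

end SupNorm

section Biorthogonal

variable {X : Type*} [NormedAddCommGroup X] [NormedSpace ℝ X]

lemma exists_dual_eq_one_of_le_norm_sub {E : Submodule ℝ X} {y : X} {r : ℝ} (hr : 0 < r)
    (hy : ∀ e ∈ E, r ≤ ‖y - e‖) :
    ∃ f : StrongDual ℝ X, ‖f‖ ≤ r⁻¹ ∧ f y = 1 ∧ ∀ e ∈ E, f e = 0 := by
  have hry : r ≤ ‖E.mkQL y‖ := by
    rw [show ‖E.mkQL y‖ = Metric.infDist y E from QuotientAddGroup.norm_mk _,
      Metric.le_infDist ⟨0, E.zero_mem⟩]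
    intro e he
    simpa [dist_eq_norm] using hy e he
  have hd : 0 < ‖E.mkQL y‖ := hr.trans_le hry
  obtain ⟨g, hg, hgy⟩ := exists_dual_vector ℝ (E.mkQL y) hd.ne'
  refine ⟨‖E.mkQL y‖⁻¹ • g.comp E.mkQL, ?_, ?_, fun e he => ?_⟩
  · refine ContinuousLinearMap.opNorm_le_bound _ (by positivity) fun x => ?_
    calc ‖(‖E.mkQL y‖⁻¹ • g.comp E.mkQL) x‖ ≤ ‖E.mkQL y‖⁻¹ * ‖E.mkQL x‖ := by
          simpa [norm_smul, hd.ne', abs_of_pos hd] using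
            mul_le_mul_of_nonneg_left ((g.le_opNorm _).trans_eq (by rw [hg, one_mul]))
              (inv_nonneg.2 hd.le)
      _ ≤ r⁻¹ * ‖x‖ := by gcongr; exact Submodule.Quotient.norm_mk_le E x
  · rw [smul_apply, ContinuousLinearMap.comp_apply, hgy, smul_eq_mul]
    exact inv_mul_cancel₀ hd.ne'
  · simp [(Submodule.Quotient.mk_eq_zero E).2 he]

lemma exists_ne_zero_forall_apply_eq_zero (hinf : ¬ FiniteDimensional ℝ X)
    (S : Finset (StrongDual ℝ X)) : ∃ x ≠ 0, ∀ φ ∈ S, φ x = 0 := by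
  let L : X →ₗ[ℝ] (S → ℝ) := LinearMap.pi fun φ => ((φ : StrongDual ℝ X) : X →ₗ[ℝ] ℝ)
  have hker : LinearMap.ker L ≠ ⊥ := fun h =>
    hinf (FiniteDimensional.of_injective L (LinearMap.ker_eq_bot.1 h))
  obtain ⟨x, hx, hx0⟩ := Submodule.exists_mem_ne_zero_of_ne_bot hker
  exact ⟨x, hx0, fun φ hφ => congrFun (LinearMap.mem_ker.1 hx) ⟨φ, hφ⟩⟩

lemma Submodule.exists_finset_norming (E : Submodule ℝ X) [FiniteDimensional ℝ E] :
    ∃ T : Finset (StrongDual ℝ X), (∀ χ ∈ T, ‖χ‖ ≤ 1) ∧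
      ∀ e ∈ E, e ≠ 0 → ∃ χ ∈ T, ‖e‖ ≤ 2 * χ e := by
  choose χ hχ using fun x : X => exists_dual_vector'' ℝ x
  have hK : IsCompact ((↑) '' Metric.sphere (0 : E) 1 : Set X) :=
    (isCompact_sphere _ _).image continuous_subtype_val
  obtain ⟨t, ht⟩ := hK.elim_finite_subcover (fun x => {v | 1 / 2 < χ x v})
    (fun x => isOpen_lt continuous_const (χ x).continuous) fun v hv => by
      obtain ⟨u, hu, rfl⟩ := hv
      refine Set.mem_iUnion.2 ⟨u, ?_⟩
      have hu1 : ‖(u : X)‖ = 1 := by simpa using hu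
      norm_num [(hχ u).2, hu1]
  classical
  refine ⟨t.image χ, by simp [(hχ _).1], fun e he he0 => ?_⟩
  have hu : ‖e‖⁻¹ • e ∈ ((↑) '' Metric.sphere (0 : E) 1 : Set X) :=
    ⟨⟨‖e‖⁻¹ • e, E.smul_mem _ he⟩, by simp [norm_smul, he0], rfl⟩
  obtain ⟨x, hxt, hx⟩ := Set.mem_iUnion₂.1 (ht hu)
  refine ⟨χ x, Finset.mem_image_of_mem _ hxt, ?_⟩
  have hpos : 0 < ‖e‖ := norm_pos_iff.2 he0
  rw [Set.mem_ofPred_eq, map_smul, smul_eq_mul, lt_inv_mul_iff₀ hpos] at hx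
  linarith

lemma exists_norm_eq_one_forall_apply_eq_zero_le_norm_sub (hinf : ¬ FiniteDimensional ℝ X)
    (E : Submodule ℝ X) [FiniteDimensional ℝ E] (S : Finset (StrongDual ℝ X)) :
    ∃ y : X, ‖y‖ = 1 ∧ (∀ φ ∈ S, φ y = 0) ∧ ∀ e ∈ E, 1 / 3 ≤ ‖y - e‖ := by
  classical
  obtain ⟨T, hT, hTE⟩ := E.exists_finset_norming
  obtain ⟨x, hx0, hx⟩ := exists_ne_zero_forall_apply_eq_zero hinf (S ∪ T)
  set y := ‖x‖⁻¹ • x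
  have hy1 : ‖y‖ = 1 := by simp [y, norm_smul, hx0]
  have hy : ∀ φ ∈ S ∪ T, φ y = 0 := fun φ hφ => by simp [y, hx φ hφ]
  refine ⟨y, hy1, fun φ hφ => hy φ (Finset.mem_union_left _ hφ), fun e he => ?_⟩
  have h1 : 1 - ‖e‖ ≤ ‖y - e‖ := by
    simpa [hy1] using norm_sub_norm_le y e
  have h2 : ‖e‖ ≤ 2 * ‖y - e‖ := by
    rcases eq_or_ne e 0 with rfl | he0
    · simp
    obtain ⟨χ, hχT, hχ⟩ := hTE e he he0
    calc ‖e‖ ≤ 2 * χ (e - y) := by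
          rwa [map_sub, hy χ (Finset.mem_union_right _ hχT), sub_zero]
      _ ≤ 2 * (‖χ‖ * ‖e - y‖) := by gcongr; exact (le_abs_self _).trans (χ.le_opNorm _)
      _ ≤ 2 * ‖y - e‖ := by
          rw [norm_sub_rev]; gcongr; exact mul_le_of_le_one_left (norm_nonneg _) (hT χ hχT)
  linarith

lemma exists_biorthogonal_seq (hinf : ¬ FiniteDimensional ℝ X) :
    ∃ (e : ℕ → X) (f : ℕ → StrongDual ℝ X), (∀ n, ‖e n‖ = 1) ∧ (∀ n, ‖f n‖ ≤ 3) ∧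
      ∀ m n, f m (e n) = if m = n then 1 else 0 := by
  classical
  obtain ⟨p, hp, hrel⟩ := exists_seq_of_forall_finset_exists
    (fun p : X × StrongDual ℝ X => ‖p.1‖ = 1 ∧ ‖p.2‖ ≤ 3 ∧ p.2 p.1 = 1)
    (fun p q => q.2 p.1 = 0 ∧ p.2 q.1 = 0) fun s _ => by
      obtain ⟨y, hy1, hyS, hyE⟩ := exists_norm_eq_one_forall_apply_eq_zero_le_norm_sub hinf
        (Submodule.span ℝ (s.image Prod.fst : Set X)) (s.image Prod.snd)
      obtain ⟨f, hf, hfy, hfE⟩ := exists_dual_eq_one_of_le_norm_sub (by norm_num) hyE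
      refine ⟨(y, f), ⟨hy1, by norm_num at hf; exact hf, hfy⟩, fun q hq =>
        ⟨hfE _ (Submodule.subset_span ?_), hyS _ (Finset.mem_image_of_mem _ hq)⟩⟩
      exact Finset.mem_coe.2 (Finset.mem_image_of_mem _ hq)
  refine ⟨fun n => (p n).1, fun n => (p n).2, fun n => (hp n).1, fun n => (hp n).2.1,
    fun m n => ?_⟩
  rcases lt_trichotomy m n with h | rfl | h
  · simp [h.ne, (hrel m n h).2]
  · simp [(hp m).2.2]
  · simp [h.ne', (hrel n m h).1]

lemma exists_biorthogonal (κ : Type*) [Countable κ] [DecidableEq κ]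
    (hinf : ¬ FiniteDimensional ℝ X) :
    ∃ (e : κ → X) (f : κ → StrongDual ℝ X), (∀ i, ‖e i‖ = 1) ∧ (∀ i, ‖f i‖ ≤ 3) ∧
      ∀ i j, f i (e j) = if i = j then 1 else 0 := by
  obtain ⟨e, f, he, hf, hef⟩ := exists_biorthogonal_seq hinf
  obtain ⟨ι, hι⟩ := Countable.exists_injective_nat κ
  exact ⟨e ∘ ι, f ∘ ι, fun i => he _, fun i => hf _, fun i j => by simp [hef, hι.eq_iff]⟩

/-- Subtracting from every `f i` a weak* cluster point of `f ∘ s` (Banach–Alaoglu) keeps the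
system biorthogonal, because that cluster point vanishes on every `e j`. -/
lemma exists_biorthogonal_mapClusterPt_zero {κ : Type*} [DecidableEq κ] {e : κ → X}
    {f : κ → StrongDual ℝ X} {C : ℝ} (hf : ∀ i, ‖f i‖ ≤ C)
    (hef : ∀ i j, f i (e j) = if i = j then 1 else 0)
    {s : ℕ → κ} (hs : Function.Injective s) :
    ∃ f' : κ → StrongDual ℝ X, (∀ i, ‖f' i‖ ≤ 2 * C) ∧
      (∀ i j, f' i (e j) = if i = j then 1 else 0) ∧
      MapClusterPt (0 : WeakDual ℝ X) atTop fun n => StrongDual.toWeakDual (f' (s n)) := by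
  obtain ⟨φ, hφC, hφ⟩ :=
    (WeakDual.isCompact_closedBall (0 : StrongDual ℝ X) C).exists_mapClusterPt (f := atTop)
      (u := fun n => StrongDual.toWeakDual (f (s n)))
      (tendsto_principal.2 (Eventually.of_forall fun n => by simpa using hf (s n)))
  have hφe : ∀ j, φ (e j) = 0 := fun j => by
    refine isClosed_singleton.mem_of_mapClusterPt
      (hφ.continuousAt_comp (f := fun ψ : WeakDual ℝ X => ψ (e j))
        (WeakDual.eval_continuous (e j)).continuousAt) ?_
    have hsj : ∀ᶠ n in atTop, s n ≠ j := by
      rw [← Nat.cofinite_eq_atTop]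
      exact hs.tendsto_cofinite.eventually (eventually_cofinite_ne j)
    filter_upwards [hsj] with n hn
    simp [hef, hn]
  refine ⟨fun i => f i - WeakDual.toStrongDual φ, fun i => ?_, fun i j => ?_, ?_⟩
  · refine (norm_sub_le _ _).trans ?_
    have : ‖WeakDual.toStrongDual φ‖ ≤ C := by simpa using hφC
    linarith [hf i]
  · simp [hef, hφe]
  · simpa [Function.comp_def] using hφ.continuousAt_comp (f := fun ψ : WeakDual ℝ X => ψ - φ)
      (continuous_id.sub continuous_const).continuousAt

end Biorthogonal

lemma Convex.mem_closure_of_add_sub_succ_mem {E : Type*} [SeminormedAddCommGroup E]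
    [NormedSpace ℝ E] {C : Set E} (hC : Convex ℝ C) {a : ℕ → E} {M : ℝ} (ha : ∀ d, ‖a d‖ ≤ M)
    {x : E} (h : ∀ d, x + (a d - a (d + 1)) ∈ C) : x ∈ closure C := by
  rw [Metric.mem_closure_iff]
  intro ε hε
  obtain ⟨L, hL⟩ := exists_nat_gt (2 * M / ε)
  set n : ℕ := L + 1
  have hn : (0 : ℝ) < n := by positivity
  have hsum : ∑ d ∈ Finset.range n, (n : ℝ)⁻¹ • (x + (a d - a (d + 1))) =
      x + (n : ℝ)⁻¹ • (a 0 - a n) := by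
    rw [← Finset.smul_sum, Finset.sum_add_distrib, Finset.sum_range_sub', Finset.sum_const,
      Finset.card_range, smul_add, ← Nat.cast_smul_eq_nsmul ℝ, smul_smul, inv_mul_cancel₀ hn.ne',
      one_smul]
  refine ⟨∑ d ∈ Finset.range n, (n : ℝ)⁻¹ • (x + (a d - a (d + 1))),
    hC.sum_mem (fun _ _ => by positivity) (by simp [hn.ne']) fun d _ => h d, ?_⟩
  rw [hsum, dist_self_add_right, norm_smul, Real.norm_eq_abs, abs_inv, abs_of_pos hn,
    inv_mul_lt_iff₀ hn]
  calc ‖a 0 - a n‖ ≤ 2 * M := by linarith [norm_sub_le (a 0) (a n), ha 0, ha n]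
    _ < n * ε := by
      rw [div_lt_iff₀ hε] at hL
      have : (L : ℝ) < n := by simp [n]
      nlinarith

lemma sum_ofFn_succ {M : Type*} [AddCommMonoid M] (g : List Bool → M) (d : ℕ) :
    ∑ v : Fin (d + 1) → Bool, g (List.ofFn v) =
      ∑ v : Fin d → Bool, (g (true :: List.ofFn v) + g (false :: List.ofFn v)) := by
  rw [← (Fin.consEquiv fun _ => Bool).sum_comp, Fintype.sum_prod_type, Fintype.sum_bool,
    ← Finset.sum_add_distrib]
  simp [Fin.consEquiv, List.ofFn_succ]

section Tree

-- `none` indexes the root, `some (.inl t)` the node `t` of the binary tree, whose children are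
-- `true :: t` and `false :: t`, and `some (.inr n)` the weak*-null part of the system.
variable {X : Type*} [NormedAddCommGroup X] [NormedSpace ℝ X]
  (e : Option (List Bool ⊕ ℕ) → X) (f : Option (List Bool ⊕ ℕ) → StrongDual ℝ X)

noncomputable def treeFunctional : List Bool → StrongDual ℝ X
  | [] => (-2 : ℝ) • f (some (.inl []))
  | b :: t => (-2 : ℝ) • f (some (.inl (b :: t))) + (2⁻¹ : ℝ) • treeFunctional t

noncomputable def treeDirection (t : List Bool) : X :=
  e (some (.inl t)) - (2⁻¹ : ℝ) • (e (some (.inl (true :: t))) + e (some (.inl (false :: t))))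

noncomputable def levelAverage (d : ℕ) : X :=
  ((2 : ℝ) ^ d)⁻¹ • ∑ v : Fin d → Bool, e (some (.inl (List.ofFn v)))

variable {e f}

lemma norm_treeFunctional_le {C : ℝ} (hf : ∀ i, ‖f i‖ ≤ C) (t : List Bool) :
    ‖treeFunctional f t‖ ≤ 4 * C := by
  have hC : 0 ≤ C := (norm_nonneg _).trans (hf none)
  induction t with
  | nil =>
    calc ‖treeFunctional f []‖ = 2 * ‖f (some (.inl []))‖ := by simp [treeFunctional, norm_smul]
      _ ≤ 4 * C := by linarith [hf (some (.inl []))]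
  | cons b t ih =>
    calc ‖treeFunctional f (b :: t)‖ ≤ 2 * C + 2⁻¹ * (4 * C) := by
          refine (norm_add_le _ _).trans (add_le_add ?_ ?_) <;> rw [norm_smul] <;> norm_num
          · exact hf _
          · exact ih
      _ = 4 * C := by ring

lemma treeFunctional_apply_eq_zero (hef : ∀ i j, f i (e j) = if i = j then 1 else 0)
    {j : Option (List Bool ⊕ ℕ)} (hj : ∀ s, j ≠ some (.inl s)) (t : List Bool) :
    treeFunctional f t (e j) = 0 := by
  induction t with
  | nil => simp [treeFunctional, hef, (hj _).symm]
  | cons b t ih => simp [treeFunctional, hef, (hj _).symm, ih]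

lemma treeFunctional_apply_treeDirection (hef : ∀ i j, f i (e j) = if i = j then 1 else 0)
    (s t : List Bool) :
    treeFunctional f s (treeDirection e t) = if s = t then -2 else 0 := by
  induction s with
  | nil => simp [treeFunctional, treeDirection, hef, eq_comm]
  | cons b s ih =>
    have hfw : f (some (.inl (b :: s))) (treeDirection e t) =
        (if b :: s = t then 1 else 0) - 2⁻¹ * (if s = t then 1 else 0) := by
      cases b <;> simp [treeDirection, hef]
    rw [treeFunctional, add_apply, smul_apply, smul_apply, hfw, ih]
    split_ifs <;> simp_all

lemma apply_treeDirection_eq_zero (hef : ∀ i j, f i (e j) = if i = j then 1 else 0)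
    {j : Option (List Bool ⊕ ℕ)} (hj : ∀ s, j ≠ some (.inl s)) (t : List Bool) :
    f j (treeDirection e t) = 0 := by
  simp [treeDirection, hef, hj]

lemma norm_treeDirection_le (he : ∀ i, ‖e i‖ ≤ 1) (t : List Bool) : ‖treeDirection e t‖ ≤ 2 := by
  set a := e (some (.inl t))
  set b₁ := e (some (.inl (true :: t)))
  set b₂ := e (some (.inl (false :: t)))
  have h₁ := norm_sub_le a ((2⁻¹ : ℝ) • (b₁ + b₂))
  rw [norm_smul, Real.norm_of_nonneg (by norm_num)] at h₁
  have h₂ := norm_add_le b₁ b₂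
  rw [treeDirection]
  linarith [he (some (.inl t)), he (some (.inl (true :: t))), he (some (.inl (false :: t)))]

lemma levelAverage_sub_succ (d : ℕ) :
    levelAverage e d - levelAverage e (d + 1) =
      ∑ v : Fin d → Bool, ((2 : ℝ) ^ d)⁻¹ • treeDirection e (List.ofFn v) := by
  simp only [levelAverage, treeDirection, sum_ofFn_succ (fun t => e (some (.inl t))),
    ← Finset.smul_sum, Finset.sum_sub_distrib, pow_succ, mul_inv, smul_sub]
  module

lemma norm_levelAverage_le (he : ∀ i, ‖e i‖ ≤ 1) (d : ℕ) : ‖levelAverage e d‖ ≤ 1 := by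
  rw [levelAverage, norm_smul, norm_inv, norm_pow, Real.norm_two, inv_mul_le_iff₀ (by positivity),
    mul_one]
  calc ‖∑ v : Fin d → Bool, e (some (.inl (List.ofFn v)))‖ ≤ ∑ _v : Fin d → Bool, (1 : ℝ) :=
        norm_sum_le_of_le _ fun v _ => he _
    _ = 2 ^ d := by simp

lemma mem_closure_convexHull_add_treeDirection (he : ∀ i, ‖e i‖ ≤ 1) (x : X) :
    x ∈ closure (convexHull ℝ (Set.range fun t => x + treeDirection e t)) := by
  refine (convex_convexHull ℝ _).mem_closure_of_add_sub_succ_mem (norm_levelAverage_le he)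
    fun d => ?_
  have hcard : ∑ _v : Fin d → Bool, ((2 : ℝ) ^ d)⁻¹ = 1 := by simp
  have hx : x + (levelAverage e d - levelAverage e (d + 1)) =
      ∑ v : Fin d → Bool, ((2 : ℝ) ^ d)⁻¹ • (x + treeDirection e (List.ofFn v)) := by
    rw [levelAverage_sub_succ, Finset.sum_congr rfl fun v _ => smul_add _ x _,
      Finset.sum_add_distrib, ← Finset.sum_smul, hcard, one_smul]
  rw [hx]
  exact (convex_convexHull ℝ _).sum_mem (fun _ _ => by positivity) hcard
    fun v _ => subset_convexHull ℝ _ ⟨_, rfl⟩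

end Tree

section DeltaNorm

variable {X : Type*} [NormedAddCommGroup X] [NormedSpace ℝ X]

def deltaNormingSet (f : Option (List Bool ⊕ ℕ) → StrongDual ℝ X) : Set (StrongDual ℝ X) :=
  insert (f none) (Set.range (fun n => f (some (.inr n))) ∪
    Set.range (fun n => f none - (2 : ℝ) • f (some (.inr n))) ∪
    Set.range fun t => f none + treeFunctional f t)

noncomputable def deltaNorm (f : Option (List Bool ⊕ ℕ) → StrongDual ℝ X) : X → ℝ :=
  supNorm (1 / 4) (deltaNormingSet f)

variable {e : Option (List Bool ⊕ ℕ) → X} {f : Option (List Bool ⊕ ℕ) → StrongDual ℝ X} {C : ℝ}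

lemma norm_le_of_mem_deltaNormingSet (hf : ∀ i, ‖f i‖ ≤ C) :
    ∀ φ ∈ deltaNormingSet f, ‖φ‖ ≤ 5 * C := by
  have hC : 0 ≤ C := (norm_nonneg _).trans (hf none)
  rintro _ (rfl | (⟨n, rfl⟩ | ⟨n, rfl⟩) | ⟨t, rfl⟩)
  · linarith [hf none]
  · linarith [hf (some (.inr n))]
  · calc ‖f none - (2 : ℝ) • f (some (.inr n))‖ ≤ ‖f none‖ + 2 * ‖f (some (.inr n))‖ := by
          simpa [norm_smul] using norm_sub_le (f none) ((2 : ℝ) • f (some (.inr n)))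
      _ ≤ 5 * C := by linarith [hf none, hf (some (.inr n))]
  · exact (norm_add_le _ _).trans (by linarith [hf none, norm_treeFunctional_le hf t])

lemma isEquivNorm_deltaNorm (hf : ∀ i, ‖f i‖ ≤ C) : IsEquivNorm X (deltaNorm f) :=
  isEquivNorm_supNorm (by norm_num) (norm_le_of_mem_deltaNormingSet hf)

lemma deltaNorm_le_one {x : X} (hx : ‖x‖ ≤ 4) (h : ∀ φ ∈ deltaNormingSet f, |φ x| ≤ 1) :
    deltaNorm f x ≤ 1 :=
  supNorm_le (by norm_num) (by linarith) h

lemma abs_apply_le_deltaNorm (hf : ∀ i, ‖f i‖ ≤ C) {φ : StrongDual ℝ X}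
    (hφ : φ ∈ deltaNormingSet f) (x : X) : |φ x| ≤ deltaNorm f x :=
  abs_apply_le_supNorm (norm_le_of_mem_deltaNormingSet hf) hφ x

lemma deltaNorm_root (he : ‖e none‖ ≤ 1) (hf : ∀ i, ‖f i‖ ≤ C)
    (hef : ∀ i j, f i (e j) = if i = j then 1 else 0) : deltaNorm f (e none) = 1 := by
  refine le_antisymm (deltaNorm_le_one (by linarith) ?_) ?_
  · rintro _ (rfl | (⟨n, rfl⟩ | ⟨n, rfl⟩) | ⟨t, rfl⟩) <;>
      simp [hef, treeFunctional_apply_eq_zero hef (j := none) (by simp)]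
  · simpa [hef] using abs_apply_le_deltaNorm hf (Set.mem_insert (f none) _) (e none)

lemma deltaNorm_root_add_treeDirection_le (he : ∀ i, ‖e i‖ ≤ 1)
    (hef : ∀ i j, f i (e j) = if i = j then 1 else 0) (t : List Bool) :
    deltaNorm f (e none + treeDirection e t) ≤ 1 := by
  refine deltaNorm_le_one ?_ ?_
  · linarith [norm_add_le (e none) (treeDirection e t), he none, norm_treeDirection_le he t]
  · rintro _ (rfl | (⟨n, rfl⟩ | ⟨n, rfl⟩) | ⟨s, rfl⟩) <;>
      simp [hef, apply_treeDirection_eq_zero hef (j := none) (by simp),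
        apply_treeDirection_eq_zero hef (j := some (.inr _)) (by simp),
        treeFunctional_apply_eq_zero hef (j := none) (by simp),
        treeFunctional_apply_treeDirection hef]
    split_ifs <;> norm_num

lemma two_le_deltaNorm_treeDirection (hf : ∀ i, ‖f i‖ ≤ C)
    (hef : ∀ i j, f i (e j) = if i = j then 1 else 0) (t : List Bool) :
    2 ≤ deltaNorm f (treeDirection e t) := by
  simpa [apply_treeDirection_eq_zero hef (j := none) (by simp),
    treeFunctional_apply_treeDirection hef] using
    abs_apply_le_deltaNorm hf (Set.mem_insert_of_mem _ (Or.inr ⟨t, rfl⟩)) (treeDirection e t)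

lemma deltaNorm_root_add_coord_le (he : ∀ i, ‖e i‖ ≤ 1)
    (hef : ∀ i j, f i (e j) = if i = j then 1 else 0) (n : ℕ) :
    deltaNorm f (e none + e (some (.inr n))) ≤ 1 := by
  refine deltaNorm_le_one ?_ ?_
  · linarith [norm_add_le (e none) (e (some (.inr n))), he none, he (some (.inr n))]
  · rintro _ (rfl | (⟨m, rfl⟩ | ⟨m, rfl⟩) | ⟨s, rfl⟩) <;>
      simp [hef, treeFunctional_apply_eq_zero hef (j := none) (by simp),
        treeFunctional_apply_eq_zero hef (j := some (.inr n)) (by simp)] <;>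
      split_ifs <;> norm_num

lemma dualNormOf_deltaNorm_le_one (hf : ∀ i, ‖f i‖ ≤ C) {φ : StrongDual ℝ X}
    (hφ : φ ∈ deltaNormingSet f) : dualNormOf X (deltaNorm f) φ ≤ 1 :=
  dualNormOf_supNorm_le_one (by norm_num) (norm_le_of_mem_deltaNormingSet hf) hφ

theorem hasDeltaPointForNorm_deltaNorm (he : ∀ i, ‖e i‖ ≤ 1) (hf : ∀ i, ‖f i‖ ≤ C)
    (hef : ∀ i j, f i (e j) = if i = j then 1 else 0) : HasDeltaPointForNorm X (deltaNorm f) :=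
  hasDeltaPointForNorm_of_mem_closure_convexHull (isEquivNorm_deltaNorm hf)
    (deltaNorm_root (he none) hf hef) (deltaNorm_root_add_treeDirection_le he hef)
    (fun t => by
      rw [sub_add_cancel_left, (isEquivNorm_deltaNorm hf).map_neg]
      exact two_le_deltaNorm_treeDirection hf hef t)
    (mem_closure_convexHull_add_treeDirection he (e none))

theorem dualHasWeakStarSuperDeltaPointForNorm_deltaNorm (he : ∀ i, ‖e i‖ ≤ 1)
    (hf : ∀ i, ‖f i‖ ≤ C) (hef : ∀ i j, f i (e j) = if i = j then 1 else 0)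
    (hnull : MapClusterPt (0 : WeakDual ℝ X) atTop
      fun n => StrongDual.toWeakDual (f (some (.inr n)))) :
    DualHasWeakStarSuperDeltaPointForNorm X (deltaNorm f) := by
  have hN := isEquivNorm_deltaNorm hf
  refine dualHasWeakStarSuperDeltaPointForNorm_of_mem_closure hN
    (le_antisymm (dualNormOf_deltaNorm_le_one hf (Set.mem_insert _ _)) ?_)
    (h := fun n => f none - (2 : ℝ) • f (some (.inr n)))
    (fun n => dualNormOf_deltaNorm_le_one hf (Set.mem_insert_of_mem _ (Or.inl (Or.inr ⟨n, rfl⟩))))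
    (fun n => ?_) ?_
  · simpa [hef] using hN.le_dualNormOf (f none) (deltaNorm_root (he none) hf hef).le
  · simpa [hef] using hN.le_dualNormOf ((2 : ℝ) • f (some (.inr n)))
      (deltaNorm_root_add_coord_le he hef n)
  · have := hnull.continuousAt_comp
      (f := fun ψ => StrongDual.toWeakDual (f none) - (2 : ℝ) • ψ) (by fun_prop)
    simp only [smul_zero, sub_zero] at this
    exact closure_mono (Set.image_subset_range _ _)
      (mapClusterPt_atTop_iff_forall_mem_closure.1 this 0)

end DeltaNorm

theorem renorming_deltaPoint_and_dual_weakStarSuperDeltaPoint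
    (X : Type*) [NormedAddCommGroup X] [NormedSpace ℝ X]
    (hinf : ¬ FiniteDimensional ℝ X) :
    ∃ N : X → ℝ, IsEquivNorm X N ∧ HasDeltaPointForNorm X N ∧
      DualHasWeakStarSuperDeltaPointForNorm X N := by
  obtain ⟨e, f₀, he, hf₀, hef₀⟩ := exists_biorthogonal (Option (List Bool ⊕ ℕ)) hinf
  obtain ⟨f, hf, hef, hnull⟩ := exists_biorthogonal_mapClusterPt_zero hf₀ hef₀
    (s := fun n => some (.inr n)) fun m n h => by simpa using h
  have he' : ∀ i, ‖e i‖ ≤ 1 := fun i => (he i).le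
  exact ⟨deltaNorm f, isEquivNorm_deltaNorm hf, hasDeltaPointForNorm_deltaNorm he' hf hef,
    dualHasWeakStarSuperDeltaPointForNorm_deltaNorm he' hf hef hnull⟩
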